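/- Let 1 → Π → Γ → G → 1 be an extension of compact Lie groups and let p : E → E/Π be a principal (Π; Γ)-bundle. Then p satisfies the principal-bundle equivariant covering homotopy property — i.e., p has the right lifting property with respect to all maps X → X × I, x ↦ (x, 0), where X is a principal (Π; Γ)-bundle, in the category of Γ-spaces — if and only if p is a Hurewicz Γ-fibration. -/

import Mathlib

open MulAction Topology

universe u v w

/-- A map `p : E → B` of `Γ`-spaces is a Hurewicz `Γ`-fibration if it has the right lifting
property, in the category of `Γ`-spaces, with respect to all maps `X → X × I`, `x ↦ (x, 0)`,
where `X` is a `Γ`-space. -/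
def IsHurewiczGFibration (G : Type*) [Group G] [TopologicalSpace G] {E B : Type*}
    [TopologicalSpace E] [TopologicalSpace B] [MulAction G E] [MulAction G B]
    (p : E → B) : Prop :=
  ∀ (X : Type w) [TopologicalSpace X] [MulAction G X] [ContinuousSMul G X]
    (H : X × unitInterval → B), Continuous H →
    (∀ (g : G) (x : X) (t : unitInterval), H (g • x, t) = g • H (x, t)) →
    ∀ (f : X → E), Continuous f → (∀ (g : G) (x : X), f (g • x) = g • f x) →
    (∀ x, p (f x) = H (x, 0)) →
    ∃ L : X × unitInterval → E, Continuous L ∧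
      (∀ (g : G) (x : X) (t : unitInterval), L (g • x, t) = g • L (x, t)) ∧
      (∀ x t, p (L (x, t)) = H (x, t)) ∧ (∀ x, L (x, 0) = f x)

/-- A local trivialisation of a `Π`-free `Γ`-space around a point `e`: a `Π`-homeomorphism
from `Π × V` (with `Π` acting by left multiplication on the first factor and trivially on
`V`) onto an open neighbourhood of `e`. -/
structure ProdChart (Γ : Type u) [Group Γ] [TopologicalSpace Γ] (N : Subgroup Γ)
    (E : Type v) [TopologicalSpace E] [MulAction Γ E] (e : E) where
  V : Type v
  [tv : TopologicalSpace V]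
  ψ : ↥N × V → E
  emb : Topology.IsEmbedding ψ
  openRange : IsOpen (Set.range ψ)
  mem : e ∈ Set.range ψ
  equivariant : ∀ (n m : ↥N) (v : V), ψ (n * m, v) = (n : Γ) • ψ (m, v)

/-- A principal `(Π; Γ)`-bundle: a `Π`-free `Γ`-space `E` admitting a `Π`-invariant open
cover `{U i}` with each `U i` `Π`-homeomorphic to some `Π × V i` with trivial `Π`-action on
`V i`.  (The bundle projection is the quotient map `E → E/Π`.) -/
def IsPrincipalBundle (Γ : Type u) [Group Γ] [TopologicalSpace Γ] (N : Subgroup Γ)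
    (E : Type v) [TopologicalSpace E] [MulAction Γ E] : Prop :=
  (∀ (n : ↥N) (e : E), (n : Γ) • e = e → n = 1) ∧
  ∀ e : E, Nonempty (ProdChart Γ N E e)

variable {Γ : Type u} [Group Γ] [TopologicalSpace Γ] [IsTopologicalGroup Γ] [CompactSpace Γ]
  (N : Subgroup Γ) [N.Normal]

/-- `Γ` acts on the orbit space `E/N` by a normal subgroup `N`. -/
instance orbitQuotAction (Z : Type*) [MulAction Γ Z] :
    MulAction Γ (Quotient (orbitRel ↥N Z)) where
  smul γ := Quotient.map (γ • ·) (by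
    rintro z z' ⟨n, rfl⟩
    refine ⟨⟨γ * (n : Γ) * γ⁻¹, Subgroup.Normal.conj_mem ‹N.Normal› _ n.2 γ⟩, ?_⟩
    show (γ * (n : Γ) * γ⁻¹) • (γ • z') = γ • (n : Γ) • z'
    rw [← mul_smul, ← mul_smul]
    congr 1
    group)
  one_smul := by rintro ⟨z⟩; exact congrArg (Quotient.mk _) (one_smul _ _)
  mul_smul := by rintro g g' ⟨z⟩; exact congrArg (Quotient.mk _) (mul_smul _ _ _)

/-- A principal `(Π; Γ)`-bundle `p : E → E/Π` satisfies the principal-bundle equivariant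
covering homotopy property if it has the right lifting property, in the category of
`Γ`-spaces, with respect to all maps `X → X × I`, `x ↦ (x, 0)`, where `X` is a principal
`(Π; Γ)`-bundle. -/
def SatisfiesPrincipalECHP (E : Type v) [TopologicalSpace E] [MulAction Γ E] : Prop :=
  ∀ (X : Type w) [TopologicalSpace X] [MulAction Γ X] [ContinuousSMul Γ X],
    IsPrincipalBundle Γ N X →
    ∀ (H : X × unitInterval → Quotient (orbitRel ↥N E)), Continuous H →
    (∀ (g : Γ) (x : X) (t : unitInterval), H (g • x, t) = g • H (x, t)) →
    ∀ (f : X → E), Continuous f → (∀ (g : Γ) (x : X), f (g • x) = g • f x) →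
    (∀ x, Quotient.mk (orbitRel ↥N E) (f x) = H (x, 0)) →
    ∃ L : X × unitInterval → E, Continuous L ∧
      (∀ (g : Γ) (x : X) (t : unitInterval), L (g • x, t) = g • L (x, t)) ∧
      (∀ x t, Quotient.mk (orbitRel ↥N E) (L (x, t)) = H (x, t)) ∧ (∀ x, L (x, 0) = f x)

/-! A Hurewicz `Γ`-fibration has in particular the lifting property against cylinders on
principal `(Π; Γ)`-bundles. Conversely, the source `X` of any lifting problem maps
`Γ`-equivariantly to `E` by the initial lift `f`, and this already makes `X` a principal
`(Π; Γ)`-bundle: over a chart `ψ : Π × V → E`, the `Π`-coordinate of `ψ⁻¹ ∘ f` is a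
continuous `Π`-equivariant map `f⁻¹(range ψ) → Π`, and such a map trivialises its source
with the preimage of `1` as slice. -/

section

variable {Γ : Type*} [Group Γ] [TopologicalSpace Γ] [IsTopologicalGroup Γ]
  {Y : Type*} [TopologicalSpace Y] [MulAction Γ Y] [ContinuousSMul Γ Y]

def Homeomorph.prodFiberOfEquivariant {τ : Y → Γ} (hτ : Continuous τ)
    (hτ_smul : ∀ (g : Γ) (y : Y), τ (g • y) = g * τ y) : Γ × τ ⁻¹' {1} ≃ₜ Y where
  toFun p := p.1 • (p.2 : Y)
  invFun y := (τ y, ⟨(τ y)⁻¹ • y, by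
    rw [Set.mem_preimage, hτ_smul, inv_mul_cancel, Set.mem_singleton_iff]⟩)
  left_inv := by
    rintro ⟨g, y, hy : τ y = 1⟩
    simp [hτ_smul, hy]
  right_inv y := smul_inv_smul (τ y) y
  continuous_toFun := by fun_prop
  continuous_invFun := by fun_prop

end

attribute [local instance] ProdChart.tv

namespace ProdChart

variable {Γ : Type*} [Group Γ] [TopologicalSpace Γ] {N : Subgroup Γ}
  {E : Type*} [TopologicalSpace E] [MulAction Γ E] {e : E} (C : ProdChart Γ N E e)

lemma smul_mem_range (n : N) {z : E} (hz : z ∈ Set.range C.ψ) :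
    (n : Γ) • z ∈ Set.range C.ψ := by
  obtain ⟨⟨m, v⟩, rfl⟩ := hz
  exact ⟨(n * m, v), C.equivariant n m v⟩

noncomputable def coord (z : Set.range C.ψ) : N :=
  (C.emb.toHomeomorph.symm z).1

lemma continuous_coord : Continuous C.coord :=
  C.emb.toHomeomorph.symm.continuous.fst

lemma coord_apply (n : N) (v : C.V) : C.coord ⟨C.ψ (n, v), (n, v), rfl⟩ = n := by
  simp [coord]

lemma coord_smul (n : N) {z : E} (hz : z ∈ Set.range C.ψ) :
    C.coord ⟨(n : Γ) • z, C.smul_mem_range n hz⟩ = n * C.coord ⟨z, hz⟩ := by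
  obtain ⟨⟨m, v⟩, rfl⟩ := hz
  simp_rw [← C.equivariant, coord_apply]

variable [IsTopologicalGroup Γ] {X : Type*} [TopologicalSpace X] [MulAction Γ X]
  [ContinuousSMul Γ X]

noncomputable def ofEquivariantCoord (U : SubMulAction N X) (hU : IsOpen (U : Set X)) {x : X}
    (hx : x ∈ U) {τ : U → N} (hτ : Continuous τ)
    (hτ_smul : ∀ (n : N) (y : U), τ (n • y) = n * τ y) :
    ProdChart Γ N X x :=
  let h := Homeomorph.prodFiberOfEquivariant hτ hτ_smul
  have range_eq : Set.range (Subtype.val ∘ h) = U := by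
    rw [h.surjective.range_comp, Subtype.range_coe]
  { V := τ ⁻¹' {1}
    ψ := Subtype.val ∘ h
    emb := IsEmbedding.subtypeVal.comp h.isEmbedding
    openRange := range_eq ▸ hU
    mem := range_eq ▸ hx
    equivariant := fun n m v => mul_smul (n : Γ) (m : Γ) (v : X) }

noncomputable def comap (f : X → E) (hf : Continuous f)
    (hf_smul : ∀ (n : N) (x : X), f ((n : Γ) • x) = (n : Γ) • f x) {x : X}
    (C : ProdChart Γ N E (f x)) : ProdChart Γ N X x :=
  ofEquivariantCoord
    { carrier := f ⁻¹' Set.range C.ψ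
      smul_mem' := fun n y (hy : f y ∈ _) =>
        show f ((n : Γ) • y) ∈ _ from hf_smul n y ▸ C.smul_mem_range n hy }
    (C.openRange.preimage hf) C.mem
    (τ := fun y => C.coord ⟨f y, y.2⟩)
    (C.continuous_coord.comp ((hf.comp continuous_subtype_val).subtype_mk _))
    (fun n y => by
      have hfy : (⟨f ((n : Γ) • y), (n • y).2⟩ : Set.range C.ψ) =
          ⟨(n : Γ) • f y, C.smul_mem_range n y.2⟩ :=
        Subtype.ext (hf_smul n y)
      exact hfy ▸ C.coord_smul n y.2)

end ProdChart

theorem IsPrincipalBundle.of_equivariant {Γ : Type*} [Group Γ] [TopologicalSpace Γ]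
    [IsTopologicalGroup Γ] {N : Subgroup Γ} {X E : Type*} [TopologicalSpace X] [MulAction Γ X]
    [ContinuousSMul Γ X] [TopologicalSpace E] [MulAction Γ E] (hE : IsPrincipalBundle Γ N E)
    {f : X → E} (hf : Continuous f)
    (hf_smul : ∀ (n : N) (x : X), f ((n : Γ) • x) = (n : Γ) • f x) :
    IsPrincipalBundle Γ N X :=
  ⟨fun n x hx => hE.1 n (f x) (by rw [← hf_smul, hx]),
    fun x => ⟨(hE.2 (f x)).some.comap f hf hf_smul⟩⟩

theorem principalECHP_iff_isHurewiczGammaFibration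
    {E : Type v} [TopologicalSpace E] [MulAction Γ E]
    (hE : IsPrincipalBundle Γ N E) :
    SatisfiesPrincipalECHP.{u, v, w} N E ↔
      IsHurewiczGFibration.{w} Γ (Quotient.mk (orbitRel ↥N E)) := by
  refine ⟨fun hECHP X _ _ _ H hH hH_smul f hf hf_smul => ?_, fun hFib X _ _ _ _ => hFib X⟩
  exact hECHP X (hE.of_equivariant hf fun n => hf_smul n) H hH hH_smul f hf hf_smul
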